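/- Let n ≥ 2 and let A be a real n×n singular irreducible M-matrix. For every nonzero pattern S_U ⊆ {(i,j) : 1 ≤ i ≤ j ≤ n} that contains all diagonal pairs (i,i) and does not contain (n−1,n), there exists a unique upper triangular matrix U_G such that (U_G)_{ij} = 0 for all (i,j) ∉ S_U and (A U_G)_{ij} = δ_{ij} for all (i,j) ∈ S_U. -/

import Mathlib

/-!
Column `j` of `U_G` must solve the square system given by the rows and unknowns in
`T_j = {i | (i, j) ∈ S_U}`, and the pattern conditions make every `T_j` a proper subset of the
indices, so it suffices that proper principal submatrices of a singular irreducible M-matrix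
`A = ρ(B) I - B` are nonsingular. A kernel vector `x` of such a submatrix gives
`ρ(B) |x| ≤ B |x|` with `|x|` vanishing off `T_j`. Perron–Frobenius theory excludes this: the
Collatz–Wielandt bound (via Gelfand's formula) and positivity of `(I + B)^(n-1)` on nonzero
nonnegative vectors force a nonzero subinvariant vector at `ρ(B)` to be a positive eigenvector.
-/

open Matrix

/-- The spectral radius of a real matrix: the maximum modulus of its complex
eigenvalues (supremum of moduli of elements of the complex spectrum). -/
noncomputable def specRad {n : ℕ} (B : Matrix (Fin n) (Fin n) ℝ) : ℝ :=
  sSup ((fun z : ℂ => ‖z‖) '' spectrum ℂ (B.map Complex.ofReal))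

/-- A real square matrix is a Z-matrix if its off-diagonal entries are nonpositive. -/
def IsZMatrix {n : ℕ} (A : Matrix (Fin n) (Fin n) ℝ) : Prop :=
  ∀ i j, i ≠ j → A i j ≤ 0

/-- A Z-matrix `A` is a nonsingular M-matrix if `A = s • 1 - B` with `B`
entrywise nonnegative and `s > ρ(B)`. -/
def IsNonsingularMMatrix {n : ℕ} (A : Matrix (Fin n) (Fin n) ℝ) : Prop :=
  IsZMatrix A ∧ ∃ (s : ℝ) (B : Matrix (Fin n) (Fin n) ℝ),
    (∀ i j, 0 ≤ B i j) ∧ specRad B < s ∧ A = s • (1 : Matrix (Fin n) (Fin n) ℝ) - B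

/-- A Z-matrix `A` is a singular M-matrix if `A = ρ(B) • 1 - B` with `B`
entrywise nonnegative. -/
def IsSingularMMatrix {n : ℕ} (A : Matrix (Fin n) (Fin n) ℝ) : Prop :=
  IsZMatrix A ∧ ∃ B : Matrix (Fin n) (Fin n) ℝ,
    (∀ i j, 0 ≤ B i j) ∧ A = specRad B • (1 : Matrix (Fin n) (Fin n) ℝ) - B

/-- A matrix is irreducible if its directed graph (edge `i → j` iff `A i j ≠ 0`)
is strongly connected. -/
def IsIrreducibleMatrix {n : ℕ} (A : Matrix (Fin n) (Fin n) ℝ) : Prop :=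
  ∀ i j : Fin n, Relation.ReflTransGen (fun a b : Fin n => A a b ≠ 0) i j

/-- Lower triangular real matrix. -/
def IsLowerTri {n : ℕ} (L : Matrix (Fin n) (Fin n) ℝ) : Prop :=
  ∀ i j : Fin n, i < j → L i j = 0

/-- Upper triangular real matrix. -/
def IsUpperTri {n : ℕ} (U : Matrix (Fin n) (Fin n) ℝ) : Prop :=
  ∀ i j : Fin n, j < i → U i j = 0

/-- `L` is an FSAI lower triangular factor of `A` for the pattern `S`:
`L` is lower triangular, vanishes off the pattern, and `(L * A) i j = δ i j`
on the pattern. -/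
def IsFSAILowerFactor {n : ℕ} (A L : Matrix (Fin n) (Fin n) ℝ)
    (S : Set (Fin n × Fin n)) : Prop :=
  IsLowerTri L ∧ (∀ p : Fin n × Fin n, p ∉ S → L p.1 p.2 = 0) ∧
    ∀ p : Fin n × Fin n, p ∈ S → (L * A) p.1 p.2 = if p.1 = p.2 then 1 else 0

/-- `U` is an FSAI upper triangular factor of `A` for the pattern `S`:
`U` is upper triangular, vanishes off the pattern, and `(A * U) i j = δ i j`
on the pattern. -/
def IsFSAIUpperFactor {n : ℕ} (A U : Matrix (Fin n) (Fin n) ℝ)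
    (S : Set (Fin n × Fin n)) : Prop :=
  IsUpperTri U ∧ (∀ p : Fin n × Fin n, p ∉ S → U p.1 p.2 = 0) ∧
    ∀ p : Fin n × Fin n, p ∈ S → (A * U) p.1 p.2 = if p.1 = p.2 then 1 else 0

open Relation Filter Topology Finset

section MulVecOrder

variable {ι : Type*} [Fintype ι] {B : Matrix ι ι ℝ}

lemma mulVec_nonneg_of_nonneg (hB : ∀ i j, 0 ≤ B i j) {v : ι → ℝ} (hv : 0 ≤ v) :
    0 ≤ B *ᵥ v :=
  fun i => dotProduct_nonneg_of_nonneg (fun j => hB i j) hv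

lemma mulVec_le_mulVec_of_nonneg (hB : ∀ i j, 0 ≤ B i j) {u v : ι → ℝ} (h : u ≤ v) :
    B *ᵥ u ≤ B *ᵥ v :=
  fun i => dotProduct_le_dotProduct_of_nonneg_left h (fun j => hB i j)

lemma abs_mulVec_le (hB : ∀ i j, 0 ≤ B i j) (x : ι → ℝ) : |B *ᵥ x| ≤ B *ᵥ |x| := fun i =>
  (abs_sum_le_sum_abs _ _).trans_eq
    (sum_congr rfl fun j _ => by rw [abs_mul, abs_of_nonneg (hB i j), Pi.abs_apply])

lemma pow_smul_le_pow_mulVec [DecidableEq ι] (hB : ∀ i j, 0 ≤ B i j) {c : ℝ} (hc : 0 ≤ c)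
    {w : ι → ℝ} (h : c • w ≤ B *ᵥ w) (k : ℕ) : c ^ k • w ≤ (B ^ k) *ᵥ w := by
  induction k with
  | zero => simp
  | succ k ih =>
    calc c ^ (k + 1) • w = c ^ k • (c • w) := by rw [pow_succ, mul_smul]
      _ ≤ c ^ k • (B *ᵥ w) := smul_le_smul_of_nonneg_left h (pow_nonneg hc k)
      _ = B *ᵥ (c ^ k • w) := (mulVec_smul B _ w).symm
      _ ≤ B *ᵥ ((B ^ k) *ᵥ w) := mulVec_le_mulVec_of_nonneg hB ih
      _ = (B ^ (k + 1)) *ᵥ w := by rw [mulVec_mulVec, pow_succ']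

end MulVecOrder

lemma Relation.ReflTransGen.exists_rel_of_notMem_of_mem {α : Type*} {r : α → α → Prop}
    {s : Set α} {a b : α} (h : ReflTransGen r a b) (ha : a ∉ s) (hb : b ∈ s) :
    ∃ p ∉ s, ∃ q ∈ s, r p q := by
  induction h with
  | refl => exact absurd hb ha
  | @tail c d _ hcd ih =>
    by_cases hc : c ∈ s
    exacts [ih hc, ⟨c, hc, d, hb, hcd⟩]

lemma exists_pos_smul_le {ι : Type*} [Finite ι] (u : ι → ℝ) {v : ι → ℝ} (hv : ∀ i, 0 < v i) :
    ∃ ε > (0 : ℝ), ε • u ≤ v := by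
  have hnear : ∀ᶠ ε in 𝓝 (0 : ℝ), ∀ i, ε * u i < v i := eventually_all.2 fun i =>
    (continuous_id.mul continuous_const).continuousAt.eventually_lt continuousAt_const
      (by simpa using hv i)
  obtain ⟨ε, hε, hε0⟩ :=
    ((hnear.filter_mono nhdsWithin_le_nhds).and (self_mem_nhdsWithin (s := Set.Ioi 0))).exists
  exact ⟨ε, hε0, fun i => (hε i).le⟩

section Irreducible

variable {ι : Type*} [Fintype ι] {B : Matrix ι ι ℝ}

noncomputable def posSupport (v : ι → ℝ) : Finset ι := {i | 0 < v i}

@[simp]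
lemma mem_posSupport {v : ι → ℝ} {i : ι} : i ∈ posSupport v ↔ 0 < v i := by
  simp [posSupport]

lemma one_add_mulVec_apply [DecidableEq ι] (v : ι → ℝ) (i : ι) :
    ((1 + B) *ᵥ v) i = v i + (B *ᵥ v) i := by
  simp [add_mulVec]

lemma one_add_mulVec_nonneg [DecidableEq ι] (hB : ∀ i j, 0 ≤ B i j) {v : ι → ℝ} (hv : 0 ≤ v) :
    0 ≤ (1 + B) *ᵥ v := fun i => by
  rw [one_add_mulVec_apply]
  exact add_nonneg (hv i) (mulVec_nonneg_of_nonneg hB hv i)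

lemma posSupport_subset_one_add_mulVec [DecidableEq ι] (hB : ∀ i j, 0 ≤ B i j) {v : ι → ℝ}
    (hv : 0 ≤ v) : posSupport v ⊆ posSupport ((1 + B) *ᵥ v) := fun i hi => by
  rw [mem_posSupport, one_add_mulVec_apply] at *
  exact add_pos_of_pos_of_nonneg hi (mulVec_nonneg_of_nonneg hB hv i)

lemma one_add_mulVec_pos_of_ne_zero [DecidableEq ι] (hB : ∀ i j, 0 ≤ B i j) {v : ι → ℝ}
    (hv : 0 ≤ v) {p q : ι} (hpq : B p q ≠ 0) (hq : 0 < v q) : 0 < ((1 + B) *ᵥ v) p := by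
  have hBv : 0 < (B *ᵥ v) p :=
    calc 0 < B p q * v q := mul_pos ((hB p q).lt_of_ne' hpq) hq
      _ ≤ ∑ m, B p m * v m :=
        single_le_sum (fun m _ => mul_nonneg (hB p m) (hv m)) (mem_univ q)
  rw [one_add_mulVec_apply]
  exact add_pos_of_nonneg_of_pos (hv p) hBv

lemma posSupport_ssubset_one_add_mulVec [DecidableEq ι] (hB : ∀ i j, 0 ≤ B i j)
    (hirr : ∀ i j : ι, ReflTransGen (fun a b => B a b ≠ 0) i j) {v : ι → ℝ} (hv : 0 ≤ v)
    (hne : (posSupport v).Nonempty) (hne_univ : posSupport v ≠ univ) :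
    posSupport v ⊂ posSupport ((1 + B) *ᵥ v) := by
  obtain ⟨a, ha⟩ : ∃ a, a ∉ posSupport v := by
    simpa [eq_univ_iff_forall] using hne_univ
  obtain ⟨b, hb⟩ := hne
  obtain ⟨p, hp, q, hq, hpq⟩ :=
    (hirr a b).exists_rel_of_notMem_of_mem (s := ↑(posSupport v)) ha hb
  refine (ssubset_iff_of_subset (posSupport_subset_one_add_mulVec hB hv)).2 ⟨p, ?_, hp⟩
  exact mem_posSupport.2 (one_add_mulVec_pos_of_ne_zero hB hv hpq (mem_posSupport.1 hq))

lemma one_add_pow_mulVec_nonneg [DecidableEq ι] (hB : ∀ i j, 0 ≤ B i j) {y : ι → ℝ}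
    (hy : 0 ≤ y) (k : ℕ) : 0 ≤ ((1 + B) ^ k) *ᵥ y := by
  induction k with
  | zero => simpa using hy
  | succ k ih =>
    rw [pow_succ', ← mulVec_mulVec]
    exact one_add_mulVec_nonneg hB ih

lemma posSupport_nonempty {y : ι → ℝ} (hy : 0 ≤ y) (hy0 : y ≠ 0) : (posSupport y).Nonempty := by
  obtain ⟨i, hi⟩ := Function.ne_iff.1 hy0
  exact ⟨i, mem_posSupport.2 ((hy i).lt_of_ne' hi)⟩

lemma min_le_card_posSupport_one_add_pow_mulVec [DecidableEq ι] (hB : ∀ i j, 0 ≤ B i j)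
    (hirr : ∀ i j : ι, ReflTransGen (fun a b => B a b ≠ 0) i j) {y : ι → ℝ} (hy : 0 ≤ y)
    (hy0 : y ≠ 0) (k : ℕ) :
    min (k + 1) (Fintype.card ι) ≤ #(posSupport (((1 + B) ^ k) *ᵥ y)) := by
  obtain ⟨i, -⟩ := posSupport_nonempty hy hy0
  have hc : 0 < Fintype.card ι := Fintype.card_pos_iff.2 ⟨i⟩
  induction k with
  | zero =>
    have := card_pos.2 (posSupport_nonempty hy hy0)
    simp only [zero_add, pow_zero, one_mulVec]
    omega
  | succ k ih =>
    rw [pow_succ', ← mulVec_mulVec]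
    set v := ((1 + B) ^ k) *ᵥ y
    have hv : 0 ≤ v := one_add_pow_mulVec_nonneg hB hy k
    by_cases huniv : posSupport v = univ
    · have hsub := posSupport_subset_one_add_mulVec hB hv
      rw [huniv, univ_subset_iff] at hsub
      rw [hsub, card_univ]
      exact min_le_right _ _
    · have hne : (posSupport v).Nonempty := card_pos.1 (by omega)
      have := card_lt_card (posSupport_ssubset_one_add_mulVec hB hirr hv hne huniv)
      omega

lemma one_add_pow_mulVec_pos [DecidableEq ι] (hB : ∀ i j, 0 ≤ B i j)
    (hirr : ∀ i j : ι, ReflTransGen (fun a b => B a b ≠ 0) i j) {y : ι → ℝ} (hy : 0 ≤ y)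
    (hy0 : y ≠ 0) (i : ι) : 0 < (((1 + B) ^ (Fintype.card ι - 1)) *ᵥ y) i := by
  have hc : 0 < Fintype.card ι := Fintype.card_pos_iff.2 ⟨i⟩
  have hcard := min_le_card_posSupport_one_add_pow_mulVec hB hirr hy hy0 (Fintype.card ι - 1)
  rw [Nat.sub_add_cancel hc, min_self] at hcard
  have huniv := (card_eq_iff_eq_univ _).1 (hcard.antisymm' (card_le_univ _))
  exact mem_posSupport.1 (huniv ▸ mem_univ i)

lemma pos_of_mulVec_eq_smul [DecidableEq ι] (hB : ∀ i j, 0 ≤ B i j)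
    (hirr : ∀ i j : ι, ReflTransGen (fun a b => B a b ≠ 0) i j)
    {ρ : ℝ} (hρ : 0 ≤ ρ) {y : ι → ℝ} (hy : 0 ≤ y) (hy0 : y ≠ 0) (h : B *ᵥ y = ρ • y)
    (i : ι) : 0 < y i := by
  have hpow : ∀ k : ℕ, ((1 + B) ^ k) *ᵥ y = (1 + ρ) ^ k • y := by
    intro k
    induction k with
    | zero => simp
    | succ k ih =>
      rw [pow_succ', ← mulVec_mulVec, ih, mulVec_smul, add_mulVec, one_mulVec, h]
      module
  have hCy := one_add_pow_mulVec_pos hB hirr hy hy0 i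
  rw [hpow, Pi.smul_apply, smul_eq_mul] at hCy
  exact pos_of_mul_pos_right hCy (pow_nonneg (by linarith) _)

end Irreducible

section Columns

variable {K ι : Type*} [Field K] [Fintype ι]

lemma mulVec_apply_eq_submatrix_mulVec (A : Matrix ι ι K) {T : Set ι} [DecidablePred (· ∈ T)]
    {x : ι → K} (hx : ∀ i ∉ T, x i = 0) (i : T) :
    (A *ᵥ x) i = (A.submatrix (↑) (↑) *ᵥ fun k : T => x k) i := by
  simp only [mulVec, dotProduct, submatrix_apply]
  rw [← Fintype.sum_subtype_add_sum_subtype (· ∈ T), add_eq_left]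
  exact Fintype.sum_eq_zero _ fun k => by rw [hx k k.2, mul_zero]

lemma existsUnique_supported_mulVec_eq_on {A : Matrix ι ι K} {T : Set ι}
    (h : ∀ x : ι → K, (∀ i ∉ T, x i = 0) → (∀ i ∈ T, (A *ᵥ x) i = 0) → x = 0) (b : ι → K) :
    ∃! x : ι → K, (∀ i ∉ T, x i = 0) ∧ ∀ i ∈ T, (A *ᵥ x) i = b i := by
  classical
  set M : Matrix T T K := A.submatrix (↑) (↑)
  let ext : (T → K) → ι → K := fun u j => if hj : j ∈ T then u ⟨j, hj⟩ else 0
  have hext : ∀ u, ∀ i ∉ T, ext u i = 0 := fun u i hi => dif_neg hi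
  have hM : ∀ u (i : T), (A *ᵥ ext u) i = (M *ᵥ u) i := fun u i => by
    rw [mulVec_apply_eq_submatrix_mulVec A (hext u)]
    congr
    funext k
    simp [ext]
  have hinj : Function.Injective M.mulVec := by
    intro u v huv
    have h0 := h (ext (u - v)) (hext _) fun i hi => by
      rw [hM _ ⟨i, hi⟩, mulVec_sub, huv, sub_self]
      rfl
    funext k
    simpa [ext, sub_eq_zero] using congrFun h0 k
  obtain ⟨u, hu⟩ := mulVec_surjective_iff_isUnit.2 (mulVec_injective_iff_isUnit.1 hinj)
    fun i : T => b i
  refine ⟨ext u, ⟨hext u, fun i hi => by rw [hM u ⟨i, hi⟩, hu]⟩, fun x ⟨hx, hAx⟩ => ?_⟩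
  refine sub_eq_zero.1 (h (x - ext u) (fun i hi => by simp [hx i hi, hext u i hi]) ?_)
  intro i hi
  rw [mulVec_sub, Pi.sub_apply, hAx i hi, hM u ⟨i, hi⟩, hu, sub_self]

end Columns

lemma existsUnique_matrix_of_forall_existsUnique_col {m n α : Type*}
    {P : n → (m → α) → Prop} (h : ∀ j, ∃! c, P j c) :
    ∃! U : Matrix m n α, ∀ j, P j fun i => U i j := by
  choose c hc hu using h
  refine ⟨of fun i j => c j i, hc, fun U hU => ?_⟩
  ext i j
  exact congrFun (hu j _ (hU j)) i

lemma ofReal_le_spectralRadius_of_pow_le_norm {A : Type*} [NormedRing A] [NormedAlgebra ℂ A]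
    [CompleteSpace A] {a : A} {c : ℝ} (hc : 0 ≤ c) (h : ∀ k : ℕ, c ^ k ≤ ‖a ^ k‖) :
    ENNReal.ofReal c ≤ spectralRadius ℂ a := by
  refine ge_of_tendsto (spectrum.pow_nnnorm_pow_one_div_tendsto_nhds_spectralRadius a) ?_
  filter_upwards [eventually_gt_atTop 0] with k hk
  rw [one_div, ENNReal.le_rpow_inv_iff (by positivity), ENNReal.rpow_natCast,
    ← ENNReal.ofReal_pow hc, ← enorm_eq_nnnorm, ← ofReal_norm]
  exact ENNReal.ofReal_le_ofReal (h k)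

section MMatrix

variable {n : ℕ}

lemma specRad_nonneg (B : Matrix (Fin n) (Fin n) ℝ) : 0 ≤ specRad B :=
  Real.sSup_nonneg (by rintro _ ⟨z, -, rfl⟩; exact norm_nonneg z)

section LinftyNorm

attribute [local instance] Matrix.linftyOpNormedRing Matrix.linftyOpNormedAlgebra

lemma spectralRadius_map_ofReal_le_specRad (B : Matrix (Fin n) (Fin n) ℝ) :
    spectralRadius ℂ (B.map Complex.ofReal) ≤ ENNReal.ofReal (specRad B) := by
  refine iSup₂_le fun z hz => ?_
  rw [← enorm_eq_nnnorm, ← ofReal_norm]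
  exact ENNReal.ofReal_le_ofReal <|
    le_csSup ((spectrum.isCompact _).image continuous_norm).bddAbove ⟨z, hz, rfl⟩

lemma linfty_opNorm_map_ofReal {ι : Type*} [Fintype ι] [DecidableEq ι] (B : Matrix ι ι ℝ) :
    ‖B.map Complex.ofReal‖ = ‖B‖ := by
  simp [linfty_opNorm_def, Complex.nnnorm_real]

lemma le_specRad_of_smul_le_mulVec {B : Matrix (Fin n) (Fin n) ℝ} (hB : ∀ i j, 0 ≤ B i j)
    {c : ℝ} (hc : 0 ≤ c) {w : Fin n → ℝ} (hw : 0 ≤ w) (hw0 : w ≠ 0)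
    (h : c • w ≤ B *ᵥ w) : c ≤ specRad B := by
  have hnorm : ∀ k : ℕ, c ^ k ≤ ‖(B.map Complex.ofReal) ^ k‖ := by
    intro k
    have hck : ‖c ^ k • w‖ ≤ ‖(B ^ k) *ᵥ w‖ :=
      (pi_norm_le_iff_of_nonneg (norm_nonneg _)).2 fun i =>
        calc ‖(c ^ k • w) i‖ = (c ^ k • w) i :=
              Real.norm_of_nonneg (smul_nonneg (pow_nonneg hc k) hw i)
          _ ≤ ((B ^ k) *ᵥ w) i := pow_smul_le_pow_mulVec hB hc h k i
          _ ≤ ‖(B ^ k) *ᵥ w‖ := (le_abs_self _).trans (norm_le_pi_norm ((B ^ k) *ᵥ w) i)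
    have hBk : c ^ k * ‖w‖ ≤ ‖B ^ k‖ * ‖w‖ :=
      calc c ^ k * ‖w‖ = ‖c ^ k • w‖ := by
            rw [norm_smul, Real.norm_of_nonneg (pow_nonneg hc k)]
        _ ≤ ‖(B ^ k) *ᵥ w‖ := hck
        _ ≤ ‖B ^ k‖ * ‖w‖ := linfty_opNorm_mulVec _ _
    have hmap : (B.map Complex.ofReal) ^ k = (B ^ k).map Complex.ofReal :=
      (Matrix.map_pow B Complex.ofRealHom k).symm
    rw [hmap, linfty_opNorm_map_ofReal]
    exact le_of_mul_le_mul_right hBk (norm_pos_iff.mpr hw0)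
  exact (ENNReal.ofReal_le_ofReal_iff (specRad_nonneg B)).mp
    ((ofReal_le_spectralRadius_of_pow_le_norm hc hnorm).trans
      (spectralRadius_map_ofReal_le_specRad B))

end LinftyNorm

lemma isIrreducibleMatrix_of_smul_one_sub {B : Matrix (Fin n) (Fin n) ℝ} {ρ : ℝ}
    (h : IsIrreducibleMatrix (ρ • 1 - B)) : IsIrreducibleMatrix B := fun i j =>
  (h i j).lift' id fun a b hab => by
    rcases eq_or_ne a b with rfl | hne
    · exact .refl
    · exact .single (by simpa [hne] using hab)

lemma mulVec_eq_specRad_smul_of_le {B : Matrix (Fin n) (Fin n) ℝ} (hB : ∀ i j, 0 ≤ B i j)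
    (hirr : IsIrreducibleMatrix B) {y : Fin n → ℝ} (hy : 0 ≤ y) (hy0 : y ≠ 0)
    (h : specRad B • y ≤ B *ᵥ y) : B *ᵥ y = specRad B • y := by
  set ρ := specRad B
  set z := B *ᵥ y - ρ • y with hz_def
  by_contra hne
  set C := (1 + B) ^ (Fintype.card (Fin n) - 1)
  have hCy := one_add_pow_mulVec_pos hB hirr hy hy0
  have hCz := one_add_pow_mulVec_pos hB hirr (sub_nonneg.2 h) (sub_ne_zero.2 hne)
  obtain ⟨ε, hε, hεle⟩ := exists_pos_smul_le (C *ᵥ y) hCz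
  have hCy0 : C *ᵥ y ≠ 0 := fun h0 => by
    obtain ⟨i, -⟩ := posSupport_nonempty hy hy0
    exact (hCy i).ne' (congrFun h0 i)
  have hcomm : B * C = C * B :=
    (((Commute.one_right B).add_right (Commute.refl B)).pow_right _).eq
  -- `C` commutes with `B` and is positive, so the nonzero defect `z` becomes a uniform gain `ε`.
  have hBC : B *ᵥ (C *ᵥ y) = ρ • (C *ᵥ y) + C *ᵥ z := by
    rw [mulVec_mulVec, hcomm, ← mulVec_mulVec, ← mulVec_smul, ← mulVec_add, hz_def,
      add_sub_cancel]
  have hle : ρ + ε ≤ ρ := by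
    refine le_specRad_of_smul_le_mulVec hB (add_nonneg (specRad_nonneg B) hε.le)
      (fun i => (hCy i).le) hCy0 ?_
    rw [hBC, add_smul]
    exact add_le_add le_rfl hεle
  linarith

lemma IsSingularMMatrix.eq_zero_of_mulVec_eq_zero_on {A : Matrix (Fin n) (Fin n) ℝ}
    (hA : IsSingularMMatrix A) (hirr : IsIrreducibleMatrix A) {T : Set (Fin n)}
    (hT : T ≠ Set.univ) {x : Fin n → ℝ} (hx : ∀ i ∉ T, x i = 0)
    (hAx : ∀ i ∈ T, (A *ᵥ x) i = 0) : x = 0 := by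
  obtain ⟨-, B, hB, rfl⟩ := hA
  have hirrB := isIrreducibleMatrix_of_smul_one_sub hirr
  set ρ := specRad B
  have hsub : ρ • |x| ≤ B *ᵥ |x| := fun i => by
    by_cases hi : i ∈ T
    · have hBx : (B *ᵥ x) i = ρ * x i := by
        have := hAx i hi
        simp only [sub_mulVec, smul_mulVec, one_mulVec, Pi.sub_apply, Pi.smul_apply,
          smul_eq_mul] at this
        linarith
      calc (ρ • |x|) i = |(B *ᵥ x) i| := by
            rw [hBx, abs_mul, abs_of_nonneg (specRad_nonneg B)]; rfl
        _ ≤ (B *ᵥ |x|) i := abs_mulVec_le hB x i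
    · simpa [hx i hi] using mulVec_nonneg_of_nonneg hB (abs_nonneg x) i
  by_contra hx0
  have habs0 : |x| ≠ 0 := fun h => hx0 (funext fun i => abs_eq_zero.1 (congrFun h i))
  have hpos := pos_of_mulVec_eq_smul hB hirrB (specRad_nonneg B) (abs_nonneg x) habs0
    (mulVec_eq_specRad_smul_of_le hB hirrB (abs_nonneg x) habs0 hsub)
  obtain ⟨i, hi⟩ := (Set.ne_univ_iff_exists_notMem T).1 hT
  simpa [hx i hi] using hpos i

lemma isFSAIUpperFactor_iff {A U : Matrix (Fin n) (Fin n) ℝ} {S : Set (Fin n × Fin n)}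
    (hS : S ⊆ {p | p.1 ≤ p.2}) :
    IsFSAIUpperFactor A U S ↔ ∀ j, (∀ i ∉ {i | (i, j) ∈ S}, U i j = 0) ∧
      ∀ i ∈ {i | (i, j) ∈ S}, (A *ᵥ fun i => U i j) i = if i = j then 1 else 0 := by
  constructor
  · rintro ⟨-, hsupp, heq⟩ j
    exact ⟨fun i hi => hsupp (i, j) hi, fun i hi => heq (i, j) hi⟩
  · intro h
    exact ⟨fun i j hji => (h j).1 i fun hij => (hS hij).not_gt hji,
      fun p hp => (h p.2).1 p.1 hp, fun p hp => (h p.2).2 p.1 hp⟩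

lemma setOf_mem_col_ne_univ {S : Set (Fin n × Fin n)} (hS : S ⊆ {p | p.1 ≤ p.2}) {a b : Fin n}
    (hab : (a, b) ∉ S) (hb : ∀ j, j ≤ b) (j : Fin n) : {i | (i, j) ∈ S} ≠ Set.univ := by
  rw [Set.ne_univ_iff_exists_notMem]
  rcases (hb j).eq_or_lt with rfl | hjb
  · exact ⟨a, hab⟩
  · exact ⟨b, fun hmem => (hS hmem).not_gt hjb⟩

end MMatrix

theorem fsai_upper_exists_unique (n : ℕ) (hn : 2 ≤ n)
    (A : Matrix (Fin n) (Fin n) ℝ)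
    (hA : IsSingularMMatrix A) (hirr : IsIrreducibleMatrix A)
    (S : Set (Fin n × Fin n))
    (hS1 : S ⊆ {p : Fin n × Fin n | p.1 ≤ p.2})
    (hS3 : ((⟨n - 2, by omega⟩ : Fin n), (⟨n - 1, by omega⟩ : Fin n)) ∉ S) :
    ∃! U : Matrix (Fin n) (Fin n) ℝ, IsFSAIUpperFactor A U S := by
  have hlast (k : Fin n) : k ≤ ⟨n - 1, by omega⟩ := Fin.le_def.2 (Nat.le_sub_one_of_lt k.2)
  have hcol (j : Fin n) := existsUnique_supported_mulVec_eq_on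
    (fun x hx hAx => hA.eq_zero_of_mulVec_eq_zero_on hirr
      (setOf_mem_col_ne_univ hS1 hS3 hlast j) hx hAx)
    (fun i => if i = j then (1 : ℝ) else 0)
  simpa only [isFSAIUpperFactor_iff hS1] using existsUnique_matrix_of_forall_existsUnique_col hcol
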